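/- arXiv:math/0207151 — 6 statements merged into one kernel-verified Lean document; each statement's English description precedes it below -/
import Mathlib

section
/- With R the 9×9 R-matrix of the deformed oscillator covariance, R' = (q²/Q₁)R, and P the 9×9 permutation (flip) matrix P(x⊗y)=y⊗x, the identity (PR' + 1)(PR − 1) = 0 holds. -/
/-- The 9×9 R-matrix of the deformed oscillator covariance,
rows/columns indexed by pairs from `Fin 3` (0,1,2 standing for 1,2,3). -/
noncomputable def Rmat {K : Type*} [Field K] (q Q1 : K) :
    Matrix (Fin 3 × Fin 3) (Fin 3 × Fin 3) K := fun r c =>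
  if r = ((0 : Fin 3), (0 : Fin 3)) ∧ c = ((0 : Fin 3), (0 : Fin 3)) then 1
  else if r = (0, 1) ∧ c = (0, 1) then Q1 ^ 2 / q ^ 2
  else if r = (0, 2) ∧ c = (0, 2) then Q1 / q
  else if r = (1, 0) ∧ c = (0, 1) then (q ^ 2 - Q1) / q ^ 2
  else if r = (1, 0) ∧ c = (1, 0) then 1 / Q1
  else if r = (1, 1) ∧ c = (1, 1) then 1
  else if r = (1, 2) ∧ c = (1, 2) then 1 / q
  else if r = (1, 2) ∧ c = (2, 1) then (q ^ 2 - Q1) / q ^ 2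
  else if r = (2, 0) ∧ c = (0, 2) then (q ^ 2 - Q1) / q ^ 2
  else if r = (2, 0) ∧ c = (2, 0) then 1 / q
  else if r = (2, 1) ∧ c = (2, 1) then Q1 / q
  else if r = (2, 2) ∧ c = (0, 1) then Q1 / q ^ 2
  else if r = (2, 2) ∧ c = (1, 0) then -(1 / Q1)
  else if r = (2, 2) ∧ c = (2, 2) then 1
  else 0

/-- The flip (permutation) matrix `P` on `V ⊗ V`, `P((i,j),(k,l)) = δ_{il} δ_{jk}`. -/
noncomputable def Pflip {K : Type*} [Field K] :
    Matrix (Fin 3 × Fin 3) (Fin 3 × Fin 3) K := fun r c =>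
  if r.1 = c.2 ∧ r.2 = c.1 then 1 else 0

lemma mk0 : ∀ (h : (0:ℕ) < 3), (⟨0, h⟩ : Fin 3) = 0 := fun _ => rfl
lemma mk1 : ∀ (h : (1:ℕ) < 3), (⟨1, h⟩ : Fin 3) = 1 := fun _ => rfl
lemma mk2 : ∀ (h : (2:ℕ) < 3), (⟨2, h⟩ : Fin 3) = 2 := fun _ => rfl

lemma f01 : ((0:Fin 3) = 1) = False := by simp
lemma f02 : ((0:Fin 3) = 2) = False := by simp
lemma f10 : ((1:Fin 3) = 0) = False := by simp
lemma f12 : ((1:Fin 3) = 2) = False := by simp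
lemma f20 : ((2:Fin 3) = 0) = False := by simp
lemma f21 : ((2:Fin 3) = 1) = False := by simp

set_option maxHeartbeats 4000000 in
/-- with `R' = (q²/Q₁) R` and `P` the flip matrix,
the identity `(PR' + 1)(PR − 1) = 0` holds. -/
theorem Rmat_minimal_polynomial {K : Type*} [Field K] (q Q1 : K)
    (hq : q ≠ 0) (hQ1 : Q1 ≠ 0) :
    (Pflip * ((q ^ 2 / Q1) • Rmat q Q1) + 1) * (Pflip * Rmat q Q1 - 1) = 0 := by
  ext ⟨a, b⟩ ⟨c, d⟩
  fin_cases a <;> fin_cases b <;> fin_cases c <;> fin_cases d <;>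
    simp only [Matrix.mul_apply, Matrix.add_apply, Matrix.sub_apply, Matrix.one_apply,
      Matrix.smul_apply, Matrix.zero_apply, smul_eq_mul, Fintype.sum_prod_type,
      Fin.sum_univ_three, Rmat, Pflip, Prod.mk.injEq, mk0, mk1, mk2, f01, f02, f10, f12, f20, f21,
      eq_self_iff_true, true_and, and_true, false_and, and_false, and_self,
      if_true, if_false, mul_one, one_mul, mul_zero, zero_mul, add_zero, zero_add,
      sub_zero, zero_sub] <;>
    field_simp <;>
    ring
end

section
/- When Q₁ = q², the 9×9 R-matrix of the deformed oscillator covariance is triangular, i.e. R₁₂⁻¹ = R₂₁, where R₂₁ = P R P with P the flip on V⊗V. Equivalently, R·(PRP) = 1. -/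
/-!
At `Q₁ = q²` the R-matrix splits as `D + N`: `D` is diagonal with entry `q ^ (w i - w j)` at
`ij` for the weights `w = (2, 0, 1)`, and `N = E(33,12) - q⁻² E(33,21)`.
The flip conjugates `D` to `D⁻¹` and `N` to `N' = E(33,21) - q⁻² E(33,12)`, and
`(D + N)(D⁻¹ + N') = 1 + D N' + N D⁻¹ + N N' = 1 + N' - N' + 0`.
-/

open Matrix

namespace Matrix

variable {n α : Type*} [Fintype n] [DecidableEq n] [Semiring α]

theorem diagonal_mul_single (d : n → α) (i j : n) (c : α) :
    diagonal d * single i j c = single i j (d i * c) := by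
  ext a b
  by_cases ha : i = a <;> simp [diagonal_mul, single_apply, ha]

theorem single_mul_diagonal (d : n → α) (i j : n) (c : α) :
    single i j c * diagonal d = single i j (c * d j) := by
  ext a b
  by_cases hb : j = b <;> simp [mul_diagonal, single_apply, hb]

end Matrix

theorem Pflip_eq_permMatrix {K : Type*} [Field K] :
    (Pflip : Matrix (Fin 3 × Fin 3) (Fin 3 × Fin 3) K) =
      Equiv.Perm.permMatrix K (Equiv.prodComm (Fin 3) (Fin 3)) := by
  ext r c
  simp [Pflip, PEquiv.toMatrix_apply, Prod.ext_iff, eq_comm, and_comm]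

theorem Pflip_mul_mul_Pflip {K : Type*} [Field K]
    (M : Matrix (Fin 3 × Fin 3) (Fin 3 × Fin 3) K) :
    Pflip * M * Pflip = M.submatrix Prod.swap Prod.swap := by
  rw [Pflip_eq_permMatrix, PEquiv.toMatrix_toPEquiv_mul, PEquiv.mul_toMatrix_toPEquiv]
  rfl

def rmatWeight : Fin 3 → ℤ := ![2, 0, 1]

noncomputable def rmatDiag {K : Type*} [Field K] (q : K) (p : Fin 3 × Fin 3) : K :=
  q ^ (rmatWeight p.1 - rmatWeight p.2)

noncomputable def rmatNil {K : Type*} [Field K] (q : K) :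
    Matrix (Fin 3 × Fin 3) (Fin 3 × Fin 3) K :=
  single (2, 2) (0, 1) 1 - single (2, 2) (1, 0) (q ^ 2)⁻¹

section

variable {K : Type*} [Field K] {q : K}

theorem rmatDiag_mul_rmatDiag_swap (hq : q ≠ 0) (p : Fin 3 × Fin 3) :
    rmatDiag q p * rmatDiag q p.swap = 1 := by
  rw [rmatDiag, rmatDiag, ← zpow_add₀ hq]
  simp

theorem Rmat_sq_eq_diagonal_add (hq : q ≠ 0) :
    Rmat q (q ^ 2) = diagonal (rmatDiag q) + rmatNil q := by
  ext ⟨i, j⟩ ⟨k, l⟩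
  fin_cases i <;> fin_cases j <;> fin_cases k <;> fin_cases l <;>
    simp [Rmat, rmatDiag, rmatWeight, rmatNil, hq] <;> field_simp

theorem rmatNil_submatrix_swap :
    (rmatNil q).submatrix Prod.swap Prod.swap =
      single (2, 2) (1, 0) 1 - single (2, 2) (0, 1) (q ^ 2)⁻¹ := by
  simp only [rmatNil, submatrix_sub, Pi.sub_apply, ← Equiv.coe_prodComm, submatrix_single_equiv]
  rfl

theorem diagonal_rmatDiag_mul_submatrix_swap (hq : q ≠ 0) :
    diagonal (rmatDiag q) * (diagonal (rmatDiag q)).submatrix Prod.swap Prod.swap = 1 := by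
  rw [← Equiv.coe_prodComm, submatrix_diagonal_equiv, diagonal_mul_diagonal, ← diagonal_one]
  exact congrArg diagonal (funext (rmatDiag_mul_rmatDiag_swap hq))

theorem diagonal_rmatDiag_mul_rmatNil_swap :
    diagonal (rmatDiag q) * (rmatNil q).submatrix Prod.swap Prod.swap =
      (rmatNil q).submatrix Prod.swap Prod.swap := by
  simp [rmatNil_submatrix_swap, mul_sub, diagonal_mul_single, rmatDiag]

theorem rmatNil_mul_diagonal_swap (hq : q ≠ 0) :
    rmatNil q * (diagonal (rmatDiag q)).submatrix Prod.swap Prod.swap =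
      -(rmatNil q).submatrix Prod.swap Prod.swap := by
  rw [← Equiv.coe_prodComm, submatrix_diagonal_equiv, Equiv.coe_prodComm, rmatNil_submatrix_swap]
  simp [rmatNil, sub_mul, single_mul_diagonal, rmatDiag, rmatWeight, hq]

theorem rmatNil_mul_rmatNil_swap :
    rmatNil q * (rmatNil q).submatrix Prod.swap Prod.swap = 0 := by
  rw [rmatNil_submatrix_swap, rmatNil]
  simp [mul_sub, sub_mul]

end

/-- when `Q₁ = q²`, the R-matrix is triangular: `R · (P R P) = 1`,
i.e. `R₁₂⁻¹ = R₂₁`. -/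
theorem Rmat_triangular {K : Type*} [Field K] (q : K) (hq : q ≠ 0) :
    Rmat q (q ^ 2) * (Pflip * Rmat q (q ^ 2) * Pflip) = 1 := by
  rw [Pflip_mul_mul_Pflip, Rmat_sq_eq_diagonal_add hq]
  simp only [submatrix_add, Pi.add_apply]
  rw [add_mul, mul_add, mul_add, diagonal_rmatDiag_mul_submatrix_swap hq,
    diagonal_rmatDiag_mul_rmatNil_swap, rmatNil_mul_diagonal_swap hq, rmatNil_mul_rmatNil_swap]
  abel
end

section
/- In the free algebra on generators a, a*, q^N modulo the relations a·a* − Q₁·a*·a = (q^N)², a·q^N = q·q^N·a, q^N·a* = q·a*·q^N, the covector relation x₁x₂ = x₂x₁R holds, where x = (a, a*, q^N) and R is the given 9×9 matrix; i.e., for all i,j ∈ {1,2,3}: x_i x_j = Σ_{a,b} x_b x_a R^{ab}_{ij}. -/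
set_option maxHeartbeats 1000000


/-- in any algebra containing elements `a`, `a*`, `q^N` satisfying
the generalized oscillator relations
`a a* − Q₁ a* a = (q^N)²`, `a q^N = q q^N a`, `q^N a* = q a* q^N`
(which is the universal-property form of working in the free algebra modulo
these relations), the covector relation `x₁x₂ = x₂x₁R` holds entrywise:
`x_i x_j = Σ_{a,b} x_b x_a R^{ab}_{ij}`. -/
theorem oscillator_covector_relation {K : Type*} [Field K] {A : Type*} [Ring A]
    [Algebra K A] (q Q1 : K) (hq : q ≠ 0) (hQ1 : Q1 ≠ 0)
    (a astar qN : A)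
    (hosc : a * astar - Q1 • (astar * a) = qN ^ 2)
    (haN : a * qN = q • (qN * a))
    (hNs : qN * astar = q • (astar * qN)) :
    ∀ i j : Fin 3,
      (![a, astar, qN] i) * (![a, astar, qN] j) =
        ∑ p : Fin 3 × Fin 3,
          Rmat q Q1 p (i, j) • ((![a, astar, qN] p.2) * (![a, astar, qN] p.1)) := by
  have hosc2 : a * astar = Q1 • (astar * a) + qN * qN := by
    rw [← sq, sub_eq_iff_eq_add'.mp hosc]
  intro i j
  fin_cases i <;> fin_cases j <;>
  · simp only [Fintype.sum_prod_type, Fin.sum_univ_three, Matrix.cons_val_zero,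
      Matrix.cons_val_one, Matrix.head_cons, Matrix.cons_val_two, Matrix.tail_cons]
    norm_num [Rmat, Prod.ext_iff, Fin.ext_iff]
    all_goals
      try rw [hosc2]
      try rw [haN]
      try rw [hNs]
      match_scalars <;> field_simp <;> ring
end

section
/- In the algebra generated by K₁, K₁*, K₂, K₂*, K₃, K₃*, L₂ with the seven-parameter subgroup relations (Q₁=q² case), the element δ = L₂(K₁*K₁ − q²K₃*K₃) satisfies K₁δ = δK₁, K₂δ = q³δK₂, K₃δ = q⁶δK₃, and L₂δ = δL₂. -/
private lemma swap3 {K : Type*} [Field K] {A : Type*} [Ring A] [Algebra K A]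
    (a b c : A) (r s : K) (hab : a * b = r • (b * a)) (hac : a * c = s • (c * a)) :
    a * (b * c) = (r * s) • (b * (c * a)) := by
  rw [← mul_assoc, hab, smul_mul_assoc, mul_assoc, hac, mul_smul_comm, smul_smul]

/-- in the seven-parameter subgroup algebra (the `Q₁ = q²` case),
with relations as listed (together with their *-conjugates), the element
`δ = L₂(K₁*K₁ − q²K₃*K₃)` satisfies `K₁δ = δK₁`, `K₂δ = q³δK₂`,
`K₃δ = q⁶δK₃` and `L₂δ = δL₂`. -/
theorem seven_param_delta_commutation {K : Type*} [Field K] {A : Type*} [Ring A]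
    [Algebra K A] (q : K) (hq : q ≠ 0)
    (K1 K1s K2 K2s K3 K3s L2 : A)
    -- defining relations
    (h1 : K1 * K1s = K1s * K1)
    (h2 : K1 * K2 = q⁻¹ • (K2 * K1))
    (h3 : K1 * K2s = q • (K2s * K1))
    (h4 : K1 * K3 = q⁻¹ ^ 2 • (K3 * K1))
    (h5 : K1 * K3s = q ^ 2 • (K3s * K1))
    (h6 : K1 * L2 = L2 * K1)
    (h7 : K2 * K2s = q ^ 2 • (K2s * K2) + q ^ 2 • (K3s * K3) - K1s * K1 + L2 ^ 2)
    (h8 : K2 * K3 = q⁻¹ • (K3 * K2))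
    (h9 : K2 * K3s = q ^ 3 • (K3s * K2))
    (h10 : K2 * L2 = q • (L2 * K2))
    (h11 : K3 * K3s = q ^ 4 • (K3s * K3))
    (h12 : K3 * L2 = q ^ 2 • (L2 * K3))
    -- *-conjugate relations
    (h2s : K2s * K1s = q⁻¹ • (K1s * K2s))
    (h3s : K2 * K1s = q • (K1s * K2))
    (h4s : K3s * K1s = q⁻¹ ^ 2 • (K1s * K3s))
    (h5s : K3 * K1s = q ^ 2 • (K1s * K3))
    (h6s : L2 * K1s = K1s * L2)
    (h8s : K3s * K2s = q⁻¹ • (K2s * K3s))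
    (h9s : K3 * K2s = q ^ 3 • (K2s * K3))
    (h10s : L2 * K2s = q • (K2s * L2))
    (h12s : L2 * K3s = q ^ 2 • (K3s * L2)) :
    K1 * (L2 * (K1s * K1 - q ^ 2 • (K3s * K3))) =
        (L2 * (K1s * K1 - q ^ 2 • (K3s * K3))) * K1 ∧
    K2 * (L2 * (K1s * K1 - q ^ 2 • (K3s * K3))) =
        q ^ 3 • ((L2 * (K1s * K1 - q ^ 2 • (K3s * K3))) * K2) ∧
    K3 * (L2 * (K1s * K1 - q ^ 2 • (K3s * K3))) =
        q ^ 6 • ((L2 * (K1s * K1 - q ^ 2 • (K3s * K3))) * K3) ∧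
    L2 * (L2 * (K1s * K1 - q ^ 2 • (K3s * K3))) =
        (L2 * (K1s * K1 - q ^ 2 • (K3s * K3))) * L2 := by
  -- flipped relations
  have h2' : K2 * K1 = q • (K1 * K2) := by
    rw [h2, smul_smul, mul_inv_cancel₀ hq, one_smul]
  have h4' : K3 * K1 = q ^ 2 • (K1 * K3) := by
    rw [h4, smul_smul, inv_pow, mul_inv_cancel₀ (pow_ne_zero 2 hq), one_smul]
  have h6' : L2 * K1 = K1 * L2 := h6.symm
  have h8' : K3 * K2 = q • (K2 * K3) := by
    rw [h8, smul_smul, mul_inv_cancel₀ hq, one_smul]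
  have h12' : L2 * K3 = (q ^ 2)⁻¹ • (K3 * L2) := by
    rw [h12, smul_smul, inv_mul_cancel₀ (pow_ne_zero 2 hq), one_smul]
  have h1' : K1 * K1s = (1 : K) • (K1s * K1) := by rw [one_smul, h1]
  have h1'' : K1 * K1 = (1 : K) • (K1 * K1) := by rw [one_smul]
  have h6s' : L2 * K1s = (1 : K) • (K1s * L2) := by rw [one_smul, h6s]
  have h6'' : L2 * K1 = (1 : K) • (K1 * L2) := by rw [one_smul, h6']
  have h3'' : K3 * K3 = (1 : K) • (K3 * K3) := by rw [one_smul]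
  -- commutations with D = K1s*K1 - q^2 • (K3s*K3)
  have e1 : K1 * (K1s * K1 - q ^ 2 • (K3s * K3))
      = (K1s * K1 - q ^ 2 • (K3s * K3)) * K1 := by
    rw [mul_sub, mul_smul_comm, swap3 K1 K1s K1 1 1 h1' h1'',
      swap3 K1 K3s K3 (q ^ 2) (q⁻¹ ^ 2) h5 h4, sub_mul, smul_mul_assoc,
      mul_assoc, mul_assoc]
    match_scalars <;> field_simp
  have e2 : K2 * (K1s * K1 - q ^ 2 • (K3s * K3))
      = q ^ 2 • ((K1s * K1 - q ^ 2 • (K3s * K3)) * K2) := by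
    rw [mul_sub, mul_smul_comm, swap3 K2 K1s K1 q q h3s h2',
      swap3 K2 K3s K3 (q ^ 3) q⁻¹ h9 h8, sub_mul, smul_mul_assoc,
      mul_assoc, mul_assoc, smul_sub]
    match_scalars <;> field_simp <;> ring
  have e3 : K3 * (K1s * K1 - q ^ 2 • (K3s * K3))
      = q ^ 4 • ((K1s * K1 - q ^ 2 • (K3s * K3)) * K3) := by
    rw [mul_sub, mul_smul_comm, swap3 K3 K1s K1 (q ^ 2) (q ^ 2) h5s h4',
      swap3 K3 K3s K3 (q ^ 4) 1 h11 h3'', sub_mul, smul_mul_assoc,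
      mul_assoc, mul_assoc, smul_sub]
    match_scalars <;> field_simp <;> ring
  have e4 : L2 * (K1s * K1 - q ^ 2 • (K3s * K3))
      = (K1s * K1 - q ^ 2 • (K3s * K3)) * L2 := by
    rw [mul_sub, mul_smul_comm, swap3 L2 K1s K1 1 1 h6s' h6'',
      swap3 L2 K3s K3 (q ^ 2) (q ^ 2)⁻¹ h12s h12', sub_mul, smul_mul_assoc,
      mul_assoc, mul_assoc]
    match_scalars <;> field_simp
  refine ⟨?_, ?_, ?_, ?_⟩
  · rw [← mul_assoc, h6, mul_assoc, e1, ← mul_assoc]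
  · rw [← mul_assoc, h10, smul_mul_assoc, mul_assoc, e2, mul_smul_comm,
      smul_smul, ← mul_assoc]
    match_scalars; ring
  · rw [← mul_assoc, h12, smul_mul_assoc, mul_assoc, e3, mul_smul_comm,
      smul_smul, ← mul_assoc]
    match_scalars; ring
  · rw [mul_assoc, e4, ← mul_assoc]
end

section
/- The FRT relation Rt₁t₂ = t₂t₁R for the 9×9 R-matrix of the deformed oscillator, applied to the diagonal quantum matrix t of the five-parameter subgroup t = [[K₁,0,0],[0,K₁*,0],[K₂,K₂*,L₂]], is equivalent to the six relations K₁K₁* = K₁*K₁, K₁K₂ = qQ₁⁻¹K₂K₁, K₁K₂* = q⁻¹Q₁K₂*K₁, K₁L₂ = L₂K₁, K₂K₂* = Q₁K₂*K₂ − K₁*K₁ + L₂², K₂L₂ = qL₂K₂, together with their *-conjugates. -/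
open Matrix Kronecker

section Kronecker

variable {n α : Type*} [Fintype n] [DecidableEq n] [Semiring α]

theorem Matrix.kronecker_one_mul_one_kronecker_apply (t : Matrix n n α) (i k : n × n) :
    (t ⊗ₖ (1 : Matrix n n α) * (1 : Matrix n n α) ⊗ₖ t) i k = t i.1 k.1 * t i.2 k.2 := by
  simp [mul_apply, Fintype.sum_prod_type, one_apply]

theorem Matrix.one_kronecker_mul_kronecker_one_apply (t : Matrix n n α) (i k : n × n) :
    ((1 : Matrix n n α) ⊗ₖ t * t ⊗ₖ (1 : Matrix n n α)) i k = t i.2 k.2 * t i.1 k.1 := by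
  simp [mul_apply, Fintype.sum_prod_type, one_apply]

end Kronecker

section AlgebraMap

variable {F A m n p : Type*} [Fintype n] [CommSemiring F] [Semiring A] [Algebra F A]

theorem Matrix.map_algebraMap_mul_apply (R : Matrix m n F) (M : Matrix n p A) (i : m) (k : p) :
    (R.map (algebraMap F A) * M) i k = ∑ j, R i j • M j k := by
  simp [mul_apply, Algebra.smul_def]

theorem Matrix.mul_map_algebraMap_apply (M : Matrix m n A) (R : Matrix n p F) (i : m) (k : p) :
    (M * R.map (algebraMap F A)) i k = ∑ j, R j k • M i j := by
  simp [mul_apply, Algebra.smul_def, Algebra.commutes]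

end AlgebraMap

section FRT

variable {F A n : Type*} [Fintype n] [DecidableEq n] [CommSemiring F] [Semiring A] [Algebra F A]

def SatisfiesFRT (R : Matrix (n × n) (n × n) F) (t : Matrix n n A) : Prop :=
  R.map (algebraMap F A) * (t ⊗ₖ 1 * 1 ⊗ₖ t) = 1 ⊗ₖ t * t ⊗ₖ 1 * R.map (algebraMap F A)

theorem satisfiesFRT_iff (R : Matrix (n × n) (n × n) F) (t : Matrix n n A) :
    SatisfiesFRT R t ↔
      ∀ i k, ∑ j, R i j • (t j.1 k.1 * t j.2 k.2) = ∑ j, R j k • (t i.2 j.2 * t i.1 j.1) := by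
  simp only [SatisfiesFRT, ← Matrix.ext_iff, map_algebraMap_mul_apply, mul_map_algebraMap_apply,
    kronecker_one_mul_one_kronecker_apply, one_kronecker_mul_kronecker_one_apply]

end FRT

section FiveParam

variable {F A : Type*} [Field F] [Ring A] [Algebra F A] {q Q1 : F} {K1 K1s K2 K2s L2 : A}

def fiveParamMatrix (K1 K1s K2 K2s L2 : A) : Matrix (Fin 3) (Fin 3) A :=
  !![K1, 0, 0; 0, K1s, 0; K2, K2s, L2]

def FiveParamRelations (q Q1 : F) (K1 K1s K2 K2s L2 : A) : Prop :=
  K1 * K1s = K1s * K1 ∧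
  K1 * K2 = (q * Q1⁻¹) • (K2 * K1) ∧
  K1 * K2s = (q⁻¹ * Q1) • (K2s * K1) ∧
  K1 * L2 = L2 * K1 ∧
  K2 * K2s = Q1 • (K2s * K2) - K1s * K1 + L2 ^ 2 ∧
  K2 * L2 = q • (L2 * K2) ∧
  K2s * K1s = (q * Q1⁻¹) • (K1s * K2s) ∧
  K2 * K1s = (q⁻¹ * Q1) • (K1s * K2) ∧
  L2 * K1s = K1s * L2 ∧
  L2 * K2s = q • (K2s * L2)

theorem FiveParamRelations.of_satisfiesFRT (hq : q ≠ 0) (hQ1 : Q1 ≠ 0)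
    (h : SatisfiesFRT (Rmat q Q1) (fiveParamMatrix K1 K1s K2 K2s L2)) :
    FiveParamRelations q Q1 K1 K1s K2 K2s L2 := by
  rw [satisfiesFRT_iff] at h
  have e1 := h (1, 0) (1, 0)
  have e2 := h (0, 2) (0, 0)
  have e3 := h (2, 0) (1, 0)
  have e4 := h (0, 2) (0, 2)
  have e5 := h (2, 2) (1, 0)
  have e6 := h (2, 2) (2, 0)
  have e7 := h (2, 1) (1, 1)
  have e8 := h (1, 2) (1, 0)
  have e9 := h (1, 2) (1, 2)
  have e10 := h (2, 2) (1, 2)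
  simp only [Rmat, Fin.isValue, Prod.mk.injEq, one_ne_zero, and_true, false_and, ↓reduceIte,
    zero_ne_one, and_self, Fin.reduceEq, true_and, one_div, and_false, fiveParamMatrix, of_apply,
    cons_val', cons_val_one, cons_val_zero, cons_val_fin_one, ite_smul, zero_smul,
    Fintype.sum_prod_type, Fin.sum_univ_three, mul_zero, smul_zero, ite_self, add_zero,
    Finset.sum_ite_eq', Finset.mem_univ, neg_smul, cons_val, zero_mul, neg_zero, one_smul, zero_add]
    at e1 e2 e3 e4 e5 e6 e7 e8 e9 e10
  refine ⟨?_, ?_, ?_, ?_, ?_, ?_, ?_, ?_, ?_, ?_⟩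
  · linear_combination (norm := skip) -Q1 • e1
    match_scalars <;> field_simp <;> ring
  · linear_combination (norm := skip) (q / Q1) • e2
    match_scalars <;> field_simp <;> ring
  · linear_combination (norm := skip) -Q1 • e3
    match_scalars <;> field_simp <;> ring
  · linear_combination (norm := skip) (q / Q1) • e4
    match_scalars <;> field_simp <;> ring
  · rw [sq]
    linear_combination (norm := skip) -Q1 • e5
    match_scalars <;> field_simp <;> ring
  · linear_combination (norm := skip) -q • e6
    match_scalars <;> field_simp <;> ring
  · linear_combination (norm := skip) (q / Q1) • e7
    match_scalars <;> field_simp <;> ring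
  · linear_combination (norm := skip) -Q1 • e8
    match_scalars <;> field_simp <;> ring
  · linear_combination (norm := skip) -q • e9
    match_scalars <;> field_simp <;> ring
  · linear_combination (norm := skip) -q • e10
    match_scalars <;> field_simp <;> ring

theorem FiveParamRelations.satisfiesFRT (hq : q ≠ 0) (hQ1 : Q1 ≠ 0)
    (h : FiveParamRelations q Q1 K1 K1s K2 K2s L2) :
    SatisfiesFRT (Rmat q Q1) (fiveParamMatrix K1 K1s K2 K2s L2) := by
  obtain ⟨h1, h2, h3, h4, h5, h6, h7, h8, h9, h10⟩ := h
  rw [satisfiesFRT_iff]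
  intro i k
  fin_cases i <;> fin_cases k <;>
    simp [Fintype.sum_prod_type, Fin.sum_univ_three, Rmat, fiveParamMatrix, smul_smul, sq,
      h1, h2, h3, h4, h5, h6, h7, h8, h9, h10] <;>
    match_scalars <;> field_simp <;> ring

end FiveParam

/-- for the five-parameter subgroup quantum matrix
`t = [[K₁,0,0],[0,K₁*,0],[K₂,K₂*,L₂]]`, the FRT relation `R t₁ t₂ = t₂ t₁ R`
(with `t₁ = t ⊗ 1`, `t₂ = 1 ⊗ t` and `R` the 9×9 oscillator R-matrix) is
equivalent to the six listed relations together with their *-conjugates. -/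
theorem five_param_FRT_equivalence {F : Type*} [Field F] {A : Type*} [Ring A]
    [Algebra F A] (q Q1 : F) (hq : q ≠ 0) (hQ1 : Q1 ≠ 0)
    (K1 K1s K2 K2s L2 : A) :
    (letI t : Matrix (Fin 3) (Fin 3) A := !![K1, 0, 0; 0, K1s, 0; K2, K2s, L2]
     letI t1 : Matrix (Fin 3 × Fin 3) (Fin 3 × Fin 3) A :=
       fun r c => t r.1 c.1 * (if r.2 = c.2 then 1 else 0)
     letI t2 : Matrix (Fin 3 × Fin 3) (Fin 3 × Fin 3) A :=
       fun r c => (if r.1 = c.1 then 1 else 0) * t r.2 c.2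
     (Rmat q Q1).map (algebraMap F A) * (t1 * t2) =
       (t2 * t1) * (Rmat q Q1).map (algebraMap F A)) ↔
    (K1 * K1s = K1s * K1 ∧
     K1 * K2 = (q * Q1⁻¹) • (K2 * K1) ∧
     K1 * K2s = (q⁻¹ * Q1) • (K2s * K1) ∧
     K1 * L2 = L2 * K1 ∧
     K2 * K2s = Q1 • (K2s * K2) - K1s * K1 + L2 ^ 2 ∧
     K2 * L2 = q • (L2 * K2) ∧
     -- *-conjugates
     K2s * K1s = (q * Q1⁻¹) • (K1s * K2s) ∧
     K2 * K1s = (q⁻¹ * Q1) • (K1s * K2) ∧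
     L2 * K1s = K1s * L2 ∧
     L2 * K2s = q • (K2s * L2)) :=
  ⟨FiveParamRelations.of_satisfiesFRT hq hQ1, FiveParamRelations.satisfiesFRT hq hQ1⟩
end

section
/- In the full nine-parameter quantum group algebra (relations as in the paper), the element δ = L₂K₁*K₁ − q⁻²Q₁²L₂K₃*K₃ + L₁K₃K₂* + L₁*K₃*K₂ − qQ₁⁻¹L₁*K₂*K₁ − q⁻¹Q₁L₁K₂K₁* satisfies K₁δ = δK₁ and L₂δ = δL₂. -/
set_option maxHeartbeats 4000000


/-- in the full nine-parameter quantum group algebra (relations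
(18) of the paper together with all their *-conjugates), the quantum
determinant
`δ = L₂K₁*K₁ − q⁻²Q₁²L₂K₃*K₃ + L₁K₃K₂* + L₁*K₃*K₂ − qQ₁⁻¹L₁*K₂*K₁ − q⁻¹Q₁L₁K₂K₁*`
commutes with `K₁` and with `L₂`. -/
theorem nine_param_delta_commutes {F : Type*} [Field F] {A : Type*} [Ring A]
    [Algebra F A] (q Q1 : F) (hq : q ≠ 0) (hQ1 : Q1 ≠ 0)
    (K1 K1s K2 K2s K3 K3s L1 L1s L2 : A)
    (h1 : K1 * K1s = K1s * K1 + (q ^ 2 * Q1⁻¹ ^ 2) • (L1s * L1) +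
      (q⁻¹ ^ 2 * Q1 * (q ^ 2 - Q1)) • (K3s * K3))
    (h2 : K1 * K2 = (q * Q1⁻¹) • (K2 * K1))
    (h3 : K1 * K2s = (q⁻¹ * Q1) • (K2s * K1) + (q * Q1⁻¹) • (L2 * L1) +
      (q⁻¹ ^ 2 * Q1 * (q ^ 2 - Q1)) • (K3s * K2))
    (h4 : K1 * K3 = (q ^ 2 * Q1⁻¹ ^ 2) • (K3 * K1))
    (h5 : K1 * K3s = Q1 • (K3s * K1) + L1 ^ 2)
    (h6 : K1 * L1 = q • (L1 * K1))
    (h7 : K1 * L1s = (q * Q1⁻¹) • (L1s * K1) + (q⁻¹ * (q ^ 2 - Q1)) • (L1 * K3))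
    (h8 : K1 * L2 = L2 * K1 + (q⁻¹ * (q ^ 2 - Q1)) • (L1 * K2))
    (h9 : K2 * K2s = Q1 • (K2s * K2) + (q⁻¹ ^ 2 * Q1 ^ 2) • (K3s * K3) -
      K1s * K1 + L2 ^ 2)
    (h10 : K2 * K3 = (q * Q1⁻¹) • (K3 * K2))
    (h11 : K2 * K3s = (q⁻¹ * Q1 ^ 2) • (K3s * K2) + L2 * L1)
    (h12 : K2 * L1 = Q1 • (L1 * K2))
    (h13 : K2 * L1s = L1s * K2 + (q⁻¹ * (q ^ 2 - Q1)) • (L2 * K3))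
    (h14 : K2 * L2 = q • (L2 * K2) - (q * Q1⁻¹) • (L1s * K1) +
      (q⁻¹ * Q1) • (L1 * K3))
    (h15 : K3 * K3s = (q⁻¹ ^ 2 * Q1 ^ 3) • (K3s * K3) + L1s * L1)
    (h16 : K3 * L1 = (q⁻¹ * Q1 ^ 2) • (L1 * K3))
    (h17 : K3 * L1s = q • (L1s * K3))
    (h18 : K3 * L2 = Q1 • (L2 * K3))
    (h19 : L1 * L1s = (q ^ 2 * Q1⁻¹ ^ 2) • (L1s * L1))
    (h20 : L1 * L2 = (q * Q1⁻¹) • (L2 * L1))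
    -- *-conjugate relations
    (h2s : K2s * K1s = (q * Q1⁻¹) • (K1s * K2s))
    (h3s : K2 * K1s = (q⁻¹ * Q1) • (K1s * K2) + (q * Q1⁻¹) • (L1s * L2) +
      (q⁻¹ ^ 2 * Q1 * (q ^ 2 - Q1)) • (K2s * K3))
    (h4s : K3s * K1s = (q ^ 2 * Q1⁻¹ ^ 2) • (K1s * K3s))
    (h5s : K3 * K1s = Q1 • (K1s * K3) + L1s ^ 2)
    (h6s : L1s * K1s = q • (K1s * L1s))
    (h7s : L1 * K1s = (q * Q1⁻¹) • (K1s * L1) + (q⁻¹ * (q ^ 2 - Q1)) • (K3s * L1s))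
    (h8s : L2 * K1s = K1s * L2 + (q⁻¹ * (q ^ 2 - Q1)) • (K2s * L1s))
    (h10s : K3s * K2s = (q * Q1⁻¹) • (K2s * K3s))
    (h11s : K3 * K2s = (q⁻¹ * Q1 ^ 2) • (K2s * K3) + L1s * L2)
    (h12s : L1s * K2s = Q1 • (K2s * L1s))
    (h13s : L1 * K2s = K2s * L1 + (q⁻¹ * (q ^ 2 - Q1)) • (K3s * L2))
    (h14s : L2 * K2s = q • (K2s * L2) - (q * Q1⁻¹) • (K1s * L1) +
      (q⁻¹ * Q1) • (K3s * L1s))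
    (h16s : L1s * K3s = (q⁻¹ * Q1 ^ 2) • (K3s * L1s))
    (h17s : L1 * K3s = q • (K3s * L1))
    (h18s : L2 * K3s = Q1 • (K3s * L2))
    (h20s : L2 * L1s = (q * Q1⁻¹) • (L1s * L2)) :
    letI δ : A := L2 * (K1s * K1) - (q⁻¹ ^ 2 * Q1 ^ 2) • (L2 * (K3s * K3)) +
      L1 * (K3 * K2s) + L1s * (K3s * K2) - (q * Q1⁻¹) • (L1s * (K2s * K1)) -
      (q⁻¹ * Q1) • (L1 * (K2 * K1s))
    K1 * δ = δ * K1 ∧ L2 * δ = δ * L2 := by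

  have trip : ∀ a b c : A, a * b = c → ∀ x : A, a * (b * x) = c * x := by
    intro a b c h x; rw [← mul_assoc, h]
  constructor <;>
  · show _ = _
    simp only [mul_sub, mul_add, sub_mul, add_mul, smul_mul_assoc,
      mul_smul_comm, smul_smul, smul_add, smul_sub, pow_two, mul_assoc,
      trip _ _ _ h1, trip _ _ _ h2, trip _ _ _ h3, trip _ _ _ h4,
      trip _ _ _ h5, trip _ _ _ h6, trip _ _ _ h7, trip _ _ _ h8,
      trip _ _ _ h9, trip _ _ _ h10, trip _ _ _ h11, trip _ _ _ h12,
      trip _ _ _ h13, trip _ _ _ h14, trip _ _ _ h15, trip _ _ _ h16,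
      trip _ _ _ h17, trip _ _ _ h18, trip _ _ _ h19, trip _ _ _ h20,
      trip _ _ _ h2s, trip _ _ _ h3s, trip _ _ _ h4s, trip _ _ _ h5s,
      trip _ _ _ h6s, trip _ _ _ h7s, trip _ _ _ h8s, trip _ _ _ h10s,
      trip _ _ _ h11s, trip _ _ _ h12s, trip _ _ _ h13s, trip _ _ _ h14s,
      trip _ _ _ h16s, trip _ _ _ h17s, trip _ _ _ h18s, trip _ _ _ h20s,
      h1, h2, h3, h4, h5, h6, h7, h8, h9, h10, h11, h12, h13, h14, h15,
      h16, h17, h18, h19, h20, h2s, h3s, h4s, h5s, h6s, h7s, h8s, h10s,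
      h11s, h12s, h13s, h14s, h16s, h17s, h18s, h20s]
    match_scalars <;>
      (try ring1; try field_simp [hq, hQ1]; try ring1;
       try field_simp [hq, hQ1]; try ring1;
       try (rw [div_eq_iff (by simp [hq, hQ1])]); try ring1;
       try (rw [eq_div_iff (by simp [hq, hQ1])]); try ring1;
       try field_simp [hq, hQ1]; try ring1;
       try ring_nf; try field_simp [hq, hQ1]; try ring1;
       try ring_nf; try field_simp [hq, hQ1]; try ring1)
end
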